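/- arXiv:1805.10643 — 5 statements merged into one kernel-verified Lean document; each statement's English description precedes it below -/
import Mathlib

section
/- The complement of Ω in (0,∞)⁴ is exactly the union of the four virtual tetrahedron spaces: (0,∞)⁴ \ Ω = D₁ ∪ D₂ ∪ D₃ ∪ D₄. Equivalently, for r ∈ (0,∞)⁴ one has Q(r) ≤ 0 if and only if r ∈ Dᵢ for some index i ∈ {1,2,3,4}. -/
open Real Finset Filter

/-- `y i = coth r i`. -/
noncomputable def yc (r : Fin 4 → ℝ) (i : Fin 4) : ℝ := Real.cosh (r i) / Real.sinh (r i)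

/-- The quantity `Q(r)` whose positivity characterizes non-degenerate hyperbolic tetrahedra. -/
noncomputable def Qh (r : Fin 4 → ℝ) : ℝ :=
  (∑ i, yc r i) ^ 2 - 2 * ∑ i, (yc r i) ^ 2 + 4

/-- The set of real ball packings of a tetrahedron. -/
noncomputable def OmegaSet : Set (Fin 4 → ℝ) := {r | (∀ i, 0 < r i) ∧ 0 < Qh r}

/-- The `i`-th virtual tetrahedron space `Dᵢ`. -/
noncomputable def Dset (i : Fin 4) : Set (Fin 4 → ℝ) :=
  {r | (∀ m, 0 < r m) ∧
    (∑ j ∈ Finset.univ.erase i, yc r j)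
      + 2 * Real.sqrt (((∑ j ∈ Finset.univ.erase i, yc r j) ^ 2
          - ∑ j ∈ Finset.univ.erase i, (yc r j) ^ 2) / 2 + 1) ≤ yc r i}

/-- The dihedral angle `β i j` of the hyperbolic tetrahedron determined by `r`. -/
noncomputable def betaAngle (r : Fin 4 → ℝ) (i j : Fin 4) : ℝ :=
  Real.arccos
    ((Real.sinh (r i) * Real.sinh (r j)
        * Real.sqrt (∏ m ∈ (Finset.univ.erase i).erase j, Real.sinh (r m)))
      / (4 * Real.sqrt (∏ m ∈ (Finset.univ.erase i).erase j, Real.sinh (r i + r j + r m)))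
      * (Qh r - (yc r i + yc r j) ^ 2
          + ((∑ m ∈ (Finset.univ.erase i).erase j, yc r m) ^ 2
              - 4 * ∏ m ∈ (Finset.univ.erase i).erase j, yc r m)))

/-- The solid angle `αᵢ` of the hyperbolic tetrahedron determined by `r`. -/
noncomputable def solidAngle (r : Fin 4 → ℝ) (i : Fin 4) : ℝ :=
  (∑ j ∈ Finset.univ.erase i, betaAngle r i j) - Real.pi

open Classical in
/-- The extended solid angle `α̃ᵢ`. -/
noncomputable def tildeAlpha (r : Fin 4 → ℝ) (i : Fin 4) : ℝ :=
  if r ∈ OmegaSet then solidAngle r i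
  else if r ∈ Dset i then 2 * Real.pi else 0

/-- Given a ball packing `r` on the vertex set `Fin N`, a vertex `i` and a tetrahedron `s`
containing `i`, the associated local packing in `(0,∞)⁴`, with the radius of `i` first. -/
noncomputable def localPacking {N : ℕ} (r : Fin N → ℝ) (i : Fin N) (s : Finset (Fin N)) :
    Fin 4 → ℝ :=
  fun m => if m = 0 then r i
    else r (((s.erase i).sort (· ≤ ·)).getD (m.val - 1) i)

/-- The extended combinatorial scalar curvature `K̃ᵢ(r)`. -/
noncomputable def Ktilde {N : ℕ} (T3 : Multiset (Finset (Fin N))) (r : Fin N → ℝ)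
    (i : Fin N) : ℝ :=
  4 * Real.pi -
    ((T3.filter (fun s => i ∈ s)).map (fun s => tildeAlpha (localPacking r i s) 0)).sum

/-- The tetra-degree of the vertex `i`. -/
def tetraDegree {N : ℕ} (T3 : Multiset (Finset (Fin N))) (i : Fin N) : ℕ :=
  (T3.filter (fun s => i ∈ s)).card

/-- `R` is a solution of the extended combinatorial Yamabe flow on the time domain `S`. -/
def IsExtYamabeFlowSolution {N : ℕ} (T3 : Multiset (Finset (Fin N)))
    (R : ℝ → Fin N → ℝ) (S : Set ℝ) : Prop :=
  (∀ t ∈ S, ∀ i, 0 < R t i) ∧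
  ∀ t ∈ S, ∀ i, HasDerivWithinAt (fun u => R u i)
      (-(Ktilde T3 (R t) i) * Real.sinh (R t i)) S t

set_option maxHeartbeats 1000000

lemma yc_gt_one {r : Fin 4 → ℝ} (hr : ∀ m, 0 < r m) (i : Fin 4) : 1 < yc r i := by
  have hs : 0 < Real.sinh (r i) := Real.sinh_pos_iff.2 (hr i)
  have hc : Real.sinh (r i) < Real.cosh (r i) := Real.sinh_lt_cosh _
  rw [yc, lt_div_iff₀ hs]; linarith

lemma fin4_cases : ∀ i : Fin 4, i = 0 ∨ i = 1 ∨ i = 2 ∨ i = 3 := by decide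

lemma mem_Dset_iff {r : Fin 4 → ℝ} (hr : ∀ m, 0 < r m) (i : Fin 4) :
    r ∈ Dset i ↔
      ((∑ j, yc r j) - yc r i)
        + 2 * Real.sqrt ((((∑ j, yc r j) - yc r i) ^ 2
            - ((∑ j, (yc r j) ^ 2) - (yc r i) ^ 2)) / 2 + 1) ≤ yc r i := by
  have h1 : ∑ j ∈ Finset.univ.erase i, yc r j = (∑ j, yc r j) - yc r i :=
    Finset.sum_erase_eq_sub (Finset.mem_univ i)
  have h2 : ∑ j ∈ Finset.univ.erase i, (yc r j) ^ 2 = (∑ j, (yc r j) ^ 2) - (yc r i) ^ 2 :=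
    Finset.sum_erase_eq_sub (Finset.mem_univ i)
  rw [Dset, Set.mem_setOf_eq, h1, h2, and_iff_right hr]

/-- The algebraic key : positivity of `A`. -/
lemma Apos {a b c d : ℝ} (ha : 1 < a) (hb : 1 < b) (hc : 1 < c) :
    0 < ((a + b + c + d - d) ^ 2 - (a ^ 2 + b ^ 2 + c ^ 2 + d ^ 2 - d ^ 2)) / 2 + 1 := by
  nlinarith [mul_pos (lt_trans one_pos ha) (lt_trans one_pos hb),
    mul_pos (lt_trans one_pos ha) (lt_trans one_pos hc),
    mul_pos (lt_trans one_pos hb) (lt_trans one_pos hc)]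

/-- The algebraic key : the max radius cannot satisfy the "negative branch". -/
lemma maxlem {a b c d : ℝ} (ha : 1 < a) (hb : 1 < b) (hc : 1 < c)
    (h1 : a ≤ d) (h2 : b ≤ d) (h3 : c ≤ d) (hu : 0 ≤ a + b + c + d - 2 * d) :
    (a + b + c + d - 2 * d) ^ 2
      < 4 * (((a + b + c + d - d) ^ 2 - (a ^ 2 + b ^ 2 + c ^ 2 + d ^ 2 - d ^ 2)) / 2 + 1) := by
  nlinarith [mul_nonneg hu (sub_nonneg.2 h1), mul_nonneg hu (sub_nonneg.2 h2),
    mul_nonneg hu (sub_nonneg.2 h3), mul_pos (lt_trans one_pos ha) (lt_trans one_pos hb),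
    mul_pos (lt_trans one_pos ha) (lt_trans one_pos hc),
    mul_pos (lt_trans one_pos hb) (lt_trans one_pos hc)]

lemma main_iff (r : Fin 4 → ℝ) (hr : ∀ m, 0 < r m) : Qh r ≤ 0 ↔ ∃ i, r ∈ Dset i := by
  have hy1 : ∀ i, 1 < yc r i := yc_gt_one hr
  have e0 := hy1 0; have e1 := hy1 1; have e2 := hy1 2; have e3 := hy1 3
  have hsum : ∑ j, yc r j = yc r 0 + yc r 1 + yc r 2 + yc r 3 := Fin.sum_univ_four _
  have hsum2 : ∑ j, (yc r j) ^ 2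
      = (yc r 0) ^ 2 + (yc r 1) ^ 2 + (yc r 2) ^ 2 + (yc r 3) ^ 2 := Fin.sum_univ_four _
  have hid : ∀ i : Fin 4,
      Qh r = 4 * ((((∑ j, yc r j) - yc r i) ^ 2
          - ((∑ j, (yc r j) ^ 2) - (yc r i) ^ 2)) / 2 + 1)
        - (2 * yc r i - ∑ j, yc r j) ^ 2 := by
    intro i; rw [Qh]; ring
  have hA : ∀ i : Fin 4,
      0 < (((∑ j, yc r j) - yc r i) ^ 2
          - ((∑ j, (yc r j) ^ 2) - (yc r i) ^ 2)) / 2 + 1 := by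
    intro i
    rw [hsum, hsum2]
    rcases fin4_cases i with h | h | h | h <;> subst h
    · have := Apos e1 e2 e3 (d := yc r 0); nlinarith [this]
    · have := Apos e0 e2 e3 (d := yc r 1); nlinarith [this]
    · have := Apos e0 e1 e3 (d := yc r 2); nlinarith [this]
    · have := Apos e0 e1 e2 (d := yc r 3); nlinarith [this]
  constructor
  · intro hQle
    obtain ⟨i, -, hmax⟩ := Finset.exists_max_image Finset.univ (yc r) ⟨0, Finset.mem_univ 0⟩
    refine ⟨i, (mem_Dset_iff hr i).2 ?_⟩
    have hAi := hA i
    have hsq : 4 * ((((∑ j, yc r j) - yc r i) ^ 2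
        - ((∑ j, (yc r j) ^ 2) - (yc r i) ^ 2)) / 2 + 1)
        ≤ (2 * yc r i - ∑ j, yc r j) ^ 2 := by
      have := hid i; linarith
    set A := (((∑ j, yc r j) - yc r i) ^ 2
        - ((∑ j, (yc r j) ^ 2) - (yc r i) ^ 2)) / 2 + 1 with hAdef
    have habs : 2 * Real.sqrt A ≤ |2 * yc r i - ∑ j, yc r j| := by
      have h4 : Real.sqrt (4 * A) ≤ Real.sqrt ((2 * yc r i - ∑ j, yc r j) ^ 2) :=
        Real.sqrt_le_sqrt hsq
      rwa [Real.sqrt_sq_eq_abs, show (4 : ℝ) * A = 2 ^ 2 * A by ring,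
        Real.sqrt_mul (by positivity) A, Real.sqrt_sq (by norm_num : (0:ℝ) ≤ 2)] at h4
    rcases le_or_gt 0 (2 * yc r i - ∑ j, yc r j) with hpos | hneg
    · rw [abs_of_nonneg hpos] at habs; linarith
    · exfalso
      rw [abs_of_neg hneg] at habs
      have hsq2 : 4 * A ≤ ((∑ j, yc r j) - 2 * yc r i) ^ 2 := by
        nlinarith [Real.sq_sqrt hAi.le, Real.sqrt_nonneg A]
      have hu : 0 ≤ (∑ j, yc r j) - 2 * yc r i := by linarith
      have m0 := hmax 0 (Finset.mem_univ 0); have m1 := hmax 1 (Finset.mem_univ 1)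
      have m2 := hmax 2 (Finset.mem_univ 2); have m3 := hmax 3 (Finset.mem_univ 3)
      rw [hAdef, hsum, hsum2] at hsq2
      rw [hsum] at hu
      rcases fin4_cases i with h | h | h | h <;> subst h
      · have := maxlem e1 e2 e3 m1 m2 m3 (by linarith); linarith [this, hsq2]
      · have := maxlem e0 e2 e3 m0 m2 m3 (by linarith); linarith [this, hsq2]
      · have := maxlem e0 e1 e3 m0 m1 m3 (by linarith); linarith [this, hsq2]
      · have := maxlem e0 e1 e2 m0 m1 m2 (by linarith); linarith [this, hsq2]
  · rintro ⟨i, hi⟩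
    have hcond := (mem_Dset_iff hr i).1 hi
    have hAi := hA i
    have hsrt := Real.sqrt_nonneg ((((∑ j, yc r j) - yc r i) ^ 2
        - ((∑ j, (yc r j) ^ 2) - (yc r i) ^ 2)) / 2 + 1)
    have := hid i
    nlinarith [Real.sq_sqrt hAi.le]


/-- `(0,∞)⁴ \ Ω = D₁ ∪ D₂ ∪ D₃ ∪ D₄`; equivalently, for positive `r`,
`Q(r) ≤ 0` iff `r ∈ Dᵢ` for some `i`. -/
theorem stmt1 :
    ({r : Fin 4 → ℝ | ∀ m, 0 < r m} \ OmegaSet = ⋃ i, Dset i) ∧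
    ∀ r : Fin 4 → ℝ, (∀ m, 0 < r m) → (Qh r ≤ 0 ↔ ∃ i, r ∈ Dset i) := by
  refine ⟨?_, main_iff⟩
  ext r
  simp only [Set.mem_diff, Set.mem_setOf_eq, Set.mem_iUnion, OmegaSet]
  constructor
  · rintro ⟨hpos, hnot⟩
    exact (main_iff r hpos).1 (by by_contra h; exact hnot ⟨hpos, lt_of_not_ge h⟩)
  · rintro ⟨i, hi⟩
    have hpos := hi.1
    have hQ : Qh r ≤ 0 := (main_iff r hpos).2 ⟨i, hi⟩
    exact ⟨hpos, fun hmem => absurd hmem.2 (not_lt.2 hQ)⟩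
end

section
/- Let r = (r₁,r₂,r₃,r₄) ∈ (0,∞)⁴ with Q(r) ≤ 0. Then the minimum of {r₁,r₂,r₃,r₄} is attained at a unique index and is strict: there is a unique i with rᵢ < r_m for all m ≠ i; moreover, for this index i one has r ∈ Dᵢ. -/
open Real Finset Filter

private lemma coreStmt2 (x a b c s t : ℝ)
    (hs : s = a + b + c) (ht : t = a^2 + b^2 + c^2)
    (ha : 1 < a) (hb : 1 < b) (hc : 1 < c)
    (hax : a ≤ x) (hbx : b ≤ x) (hcx : c ≤ x)
    (hQ : (x + s)^2 - 2*(x^2 + t) + 4 ≤ 0) :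
    s + 2 * Real.sqrt ((s^2 - t)/2 + 1) ≤ x ∧ a < x ∧ b < x ∧ c < x := by
  have hEval : (s^2 - t)/2 + 1 = a*b + a*c + b*c + 1 := by rw [hs, ht]; ring
  set E := (s^2 - t)/2 + 1 with hE
  have hab : 0 < a*b := by nlinarith
  have hac : 0 < a*c := by nlinarith
  have hbc0 : 0 < b*c := by nlinarith
  have hEpos : 0 < E := by rw [hEval]; linarith
  have hsq : Real.sqrt E ^ 2 = E := Real.sq_sqrt hEpos.le
  have hs0 : 0 ≤ Real.sqrt E := Real.sqrt_nonneg E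
  have hiden : (x + s)^2 - 2*(x^2 + t) + 4 = 4*E - (x - s)^2 := by rw [hE]; ring
  have h4E : 4*E ≤ (x - s)^2 := by linarith
  have hlow : s - x < 2 * Real.sqrt E := by
    rcases le_or_gt (s - x) 0 with h | h
    · have : 0 < Real.sqrt E := Real.sqrt_pos.mpr hEpos
      linarith
    · have hub1 : s - x ≤ b + c := by linarith
      have hub2 : s - x ≤ a + c := by linarith
      have hub3 : s - x ≤ a + b := by linarith
      have hbound : (s - x)^2 < 4*E := by
        rcases le_total b c with hbc | hbc
        · have h1 : (s-x)*(s-x) ≤ (b+c)*(a+b) :=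
            mul_le_mul hub1 hub3 h.le (by linarith)
          have h2 : b*b ≤ b*c := mul_le_mul_of_nonneg_left hbc (by linarith)
          have h3 : (b+c)*(a+b) = a*b + b*b + (a*c + b*c) := by ring
          have h4 : (s - x)^2 = (s-x)*(s-x) := by ring
          linarith
        · have h1 : (s-x)*(s-x) ≤ (b+c)*(a+c) :=
            mul_le_mul hub1 hub2 h.le (by linarith)
          have h2 : c*c ≤ b*c := mul_le_mul_of_nonneg_right hbc (by linarith)
          have h3 : (b+c)*(a+c) = a*b + c*c + (a*c + b*c) := by ring
          have h4 : (s - x)^2 = (s-x)*(s-x) := by ring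
          linarith
      by_contra hcon
      push_neg at hcon
      have h4 := pow_le_pow_left₀ (by linarith : (0:ℝ) ≤ 2 * Real.sqrt E) hcon 2
      have h5 : (2 * Real.sqrt E)^2 = 4 * E := by rw [mul_pow, hsq]; ring
      linarith
  have hxs : 2 * Real.sqrt E ≤ x - s := by
    by_contra hcon
    push_neg at hcon
    have h2 := sq_lt_sq' (by linarith : -(2 * Real.sqrt E) < x - s) hcon
    have h5 : (2 * Real.sqrt E)^2 = 4 * E := by rw [mul_pow, hsq]; ring
    linarith
  refine ⟨by linarith, by linarith, by linarith, by linarith⟩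

private lemma keyhelpStmt2 (r : Fin 4 → ℝ) (hr : ∀ m, 0 < r m) (hQ : Qh r ≤ 0) (i : Fin 4)
    (hY1 : ∀ m, 1 < yc r m) (hmax : ∀ m, yc r m ≤ yc r i) :
    r ∈ Dset i ∧ ∀ m, m ≠ i → yc r m < yc r i := by
  simp only [Qh, Fin.sum_univ_four] at hQ
  fin_cases i <;> beta_reduce <;>
    simp only [Fin.zero_eta, Fin.mk_one, Fin.reduceFinMk] <;> rw [Dset]
  · rw [show Finset.univ.erase (0:Fin 4) = {1,2,3} from by decide]
    simp only [Set.mem_setOf_eq,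
      Finset.sum_insert (by decide : (1:Fin 4) ∉ ({2,3}:Finset (Fin 4))),
      Finset.sum_insert (by decide : (2:Fin 4) ∉ ({3}:Finset (Fin 4))), Finset.sum_singleton]
    have H := coreStmt2 (yc r 0) (yc r 1) (yc r 2) (yc r 3)
      (yc r 1 + (yc r 2 + yc r 3)) (yc r 1^2 + (yc r 2^2 + yc r 3^2))
      (by ring) (by ring) (hY1 1) (hY1 2) (hY1 3) (hmax 1) (hmax 2) (hmax 3) (by linarith)
    refine ⟨⟨hr, H.1⟩, ?_⟩
    intro m hm
    fin_cases m
    · exact absurd rfl hm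
    · exact H.2.1
    · exact H.2.2.1
    · exact H.2.2.2
  · rw [show Finset.univ.erase (1:Fin 4) = {0,2,3} from by decide]
    simp only [Set.mem_setOf_eq,
      Finset.sum_insert (by decide : (0:Fin 4) ∉ ({2,3}:Finset (Fin 4))),
      Finset.sum_insert (by decide : (2:Fin 4) ∉ ({3}:Finset (Fin 4))), Finset.sum_singleton]
    have H := coreStmt2 (yc r 1) (yc r 0) (yc r 2) (yc r 3)
      (yc r 0 + (yc r 2 + yc r 3)) (yc r 0^2 + (yc r 2^2 + yc r 3^2))
      (by ring) (by ring) (hY1 0) (hY1 2) (hY1 3) (hmax 0) (hmax 2) (hmax 3) (by linarith)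
    refine ⟨⟨hr, H.1⟩, ?_⟩
    intro m hm
    fin_cases m
    · exact H.2.1
    · exact absurd rfl hm
    · exact H.2.2.1
    · exact H.2.2.2
  · rw [show Finset.univ.erase (2:Fin 4) = {0,1,3} from by decide]
    simp only [Set.mem_setOf_eq,
      Finset.sum_insert (by decide : (0:Fin 4) ∉ ({1,3}:Finset (Fin 4))),
      Finset.sum_insert (by decide : (1:Fin 4) ∉ ({3}:Finset (Fin 4))), Finset.sum_singleton]
    have H := coreStmt2 (yc r 2) (yc r 0) (yc r 1) (yc r 3)
      (yc r 0 + (yc r 1 + yc r 3)) (yc r 0^2 + (yc r 1^2 + yc r 3^2))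
      (by ring) (by ring) (hY1 0) (hY1 1) (hY1 3) (hmax 0) (hmax 1) (hmax 3) (by linarith)
    refine ⟨⟨hr, H.1⟩, ?_⟩
    intro m hm
    fin_cases m
    · exact H.2.1
    · exact H.2.2.1
    · exact absurd rfl hm
    · exact H.2.2.2
  · rw [show Finset.univ.erase (3:Fin 4) = {0,1,2} from by decide]
    simp only [Set.mem_setOf_eq,
      Finset.sum_insert (by decide : (0:Fin 4) ∉ ({1,2}:Finset (Fin 4))),
      Finset.sum_insert (by decide : (1:Fin 4) ∉ ({2}:Finset (Fin 4))), Finset.sum_singleton]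
    have H := coreStmt2 (yc r 3) (yc r 0) (yc r 1) (yc r 2)
      (yc r 0 + (yc r 1 + yc r 2)) (yc r 0^2 + (yc r 1^2 + yc r 2^2))
      (by ring) (by ring) (hY1 0) (hY1 1) (hY1 2) (hmax 0) (hmax 1) (hmax 2) (by linarith)
    refine ⟨⟨hr, H.1⟩, ?_⟩
    intro m hm
    fin_cases m
    · exact H.2.1
    · exact H.2.2.1
    · exact H.2.2.2
    · exact absurd rfl hm

private lemma ycGtOne {u : ℝ} (hu : 0 < u) : 1 < Real.cosh u / Real.sinh u := by
  have hs := Real.sinh_pos_iff.mpr hu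
  rw [one_lt_div hs]
  nlinarith [Real.cosh_sub_sinh u, Real.exp_pos (-u)]

private lemma cothLtCoth {u v : ℝ} (hu : 0 < u) (huv : u < v) :
    Real.cosh v / Real.sinh v < Real.cosh u / Real.sinh u := by
  have hsu := Real.sinh_pos_iff.mpr hu
  have hsv := Real.sinh_pos_iff.mpr (hu.trans huv)
  rw [div_lt_div_iff₀ hsv hsu]
  have h : 0 < Real.sinh (v - u) := Real.sinh_pos_iff.mpr (by linarith)
  rw [Real.sinh_sub] at h
  nlinarith

private lemma cothLtIff {u v : ℝ} (hu : 0 < u) (hv : 0 < v) :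
    Real.cosh u / Real.sinh u < Real.cosh v / Real.sinh v ↔ v < u := by
  constructor
  · intro h
    by_contra hc
    push_neg at hc
    rcases eq_or_lt_of_le hc with rfl | hlt
    · exact lt_irrefl _ h
    · exact absurd (cothLtCoth hu hlt) (by linarith)
  · exact fun h => cothLtCoth hv h

/-- If `Q(r) ≤ 0` then the minimum of the radii is attained at a unique index
and is strict, and for that index `i` one has `r ∈ Dᵢ`. -/
theorem stmt2 (r : Fin 4 → ℝ) (hr : ∀ m, 0 < r m) (hQ : Qh r ≤ 0) :
    (∃! i : Fin 4, ∀ m, m ≠ i → r i < r m) ∧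
    ∀ i : Fin 4, (∀ m, m ≠ i → r i < r m) → r ∈ Dset i := by
  have hY1 : ∀ m, 1 < yc r m := fun m => ycGtOne (hr m)
  obtain ⟨i, hi⟩ := Finite.exists_max (yc r)
  obtain ⟨hD, hstrict⟩ := keyhelpStmt2 r hr hQ i hY1 hi
  have hlt : ∀ m, m ≠ i → r i < r m := fun m hm =>
    (cothLtIff (hr m) (hr i)).mp (hstrict m hm)
  refine ⟨⟨i, hlt, ?_⟩, ?_⟩
  · intro j hj
    by_contra hne
    exact absurd (hj i (Ne.symm hne)) (not_lt.mpr (hlt j hne).le)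
  · intro i' hi'
    rcases eq_or_ne i' i with rfl | hne
    · exact hD
    · exact absurd (hi' i (Ne.symm hne)) (not_lt.mpr (hlt i' hne).le)
end

section
/- For every t > 0 the constant vector t·(1,1,1,1) lies in Ω, and α₁(t·(1,1,1,1)) = 3·arccos( cosh(2t) / (1 + 2·cosh(2t)) ) − π. The function t ↦ α₁(t·(1,1,1,1)) is strictly decreasing on (0,∞), its limit as t → 0⁺ equals 3·arccos(1/3) − π (the solid angle of a regular Euclidean tetrahedron of side length 2), and its limit as t → ∞ equals 0. -/
open Real Finset Filter

/-!
When all four radii equal `t`, the tetrahedron is the regular hyperbolic one with edge length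
`2t`, so the three dihedral angles at a vertex coincide, with cosine `cosh 2t / (1 + 2 cosh 2t)`.
As `t` runs over `(0, ∞)` this cosine increases strictly from `1/3` (the Euclidean regular
tetrahedron) to `1/2`, so `α₁ = 3 arccos(·) − π` decreases strictly from `3 arccos(1/3) − π`
to `3 · π/3 − π = 0`.
-/

/-- Cosine of the dihedral angle of the regular hyperbolic tetrahedron with edge length `l`. -/
noncomputable def regularDihedralCos (l : ℝ) : ℝ := cosh l / (1 + 2 * cosh l)

noncomputable def regularSolidAngle (l : ℝ) : ℝ := 3 * arccos (regularDihedralCos l) - π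

lemma one_add_two_cosh_pos (l : ℝ) : 0 < 1 + 2 * cosh l := by
  linarith [one_le_cosh l]

lemma regularDihedralCos_eq_one_half_sub (l : ℝ) :
    regularDihedralCos l = 1 / 2 - (2 * (1 + 2 * cosh l))⁻¹ := by
  have := one_add_two_cosh_pos l
  rw [regularDihedralCos]
  field_simp
  ring

lemma regularDihedralCos_mem_Icc (l : ℝ) : regularDihedralCos l ∈ Set.Icc (-1) 1 := by
  have hpos := one_add_two_cosh_pos l
  have hcosh := one_le_cosh l
  constructor
  · have : 0 ≤ regularDihedralCos l := div_nonneg (by linarith) hpos.le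
    linarith
  · rw [regularDihedralCos, div_le_one hpos]
    linarith

lemma regularDihedralCos_strictMonoOn : StrictMonoOn regularDihedralCos (Set.Ici 0) := by
  intro a ha b hb hab
  have hcosh := cosh_strictMonoOn ha hb hab
  rw [regularDihedralCos, regularDihedralCos,
    div_lt_div_iff₀ (one_add_two_cosh_pos a) (one_add_two_cosh_pos b)]
  linarith

lemma tendsto_cosh_atTop : Tendsto cosh atTop atTop :=
  tendsto_atTop_mono (fun x => by rw [cosh_eq]; linarith [exp_pos (-x)])
    (tendsto_exp_atTop.atTop_div_const two_pos)

lemma tendsto_regularDihedralCos_atTop : Tendsto regularDihedralCos atTop (nhds (1 / 2)) := by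
  have hden : Tendsto (fun l => 2 * (1 + 2 * cosh l)) atTop atTop :=
    tendsto_atTop_mono (fun l => by linarith [one_le_cosh l]) tendsto_cosh_atTop
  have h := hden.inv_tendsto_atTop.const_sub (1 / 2 : ℝ)
  rw [sub_zero] at h
  exact h.congr fun l => (regularDihedralCos_eq_one_half_sub l).symm

lemma regularSolidAngle_strictAntiOn : StrictAntiOn regularSolidAngle (Set.Ici 0) := by
  intro a ha b hb hab
  have := strictAntiOn_arccos (regularDihedralCos_mem_Icc a) (regularDihedralCos_mem_Icc b)
    (regularDihedralCos_strictMonoOn ha hb hab)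
  simp only [regularSolidAngle]
  linarith

lemma continuous_regularSolidAngle : Continuous regularSolidAngle := by
  unfold regularSolidAngle regularDihedralCos
  exact (continuous_const.mul (continuous_arccos.comp (continuous_cosh.div (by fun_prop)
    fun l => (one_add_two_cosh_pos l).ne'))).sub continuous_const

lemma regularSolidAngle_zero : regularSolidAngle 0 = 3 * arccos (1 / 3) - π := by
  norm_num [regularSolidAngle, regularDihedralCos]

lemma arccos_one_half : arccos (1 / 2) = π / 3 := by
  rw [← cos_pi_div_three, arccos_cos (by positivity) (by linarith [pi_pos])]

lemma tendsto_regularSolidAngle_atTop : Tendsto regularSolidAngle atTop (nhds 0) := by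
  have h := (((continuous_arccos.tendsto _).comp tendsto_regularDihedralCos_atTop).const_mul
    3).sub_const π
  rwa [arccos_one_half, show 3 * (π / 3) - π = 0 by ring] at h

lemma sinh_add_add_self (t : ℝ) : sinh (t + t + t) = sinh t * (1 + 2 * cosh (2 * t)) := by
  rw [show t + t + t = 3 * t by ring, sinh_three_mul, cosh_two_mul, cosh_sq]
  ring

lemma Qh_const (t : ℝ) : Qh (fun _ => t) = 8 * (cosh t / sinh t) ^ 2 + 4 := by
  simp only [Qh, yc, Fin.sum_univ_four]
  ring

lemma const_mem_OmegaSet {t : ℝ} (ht : 0 < t) : (fun _ => t) ∈ OmegaSet :=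
  ⟨fun _ => ht, by rw [Qh_const]; positivity⟩

lemma betaAngle_const {t : ℝ} (ht : 0 < t) {i j : Fin 4} (hij : i ≠ j) :
    betaAngle (fun _ => t) i j = arccos (regularDihedralCos (2 * t)) := by
  have hsinh : 0 < sinh t := sinh_pos_iff.2 ht
  have hcard : ((univ.erase i).erase j).card = 2 := by
    rw [card_erase_of_mem (mem_erase.2 ⟨hij.symm, mem_univ j⟩), card_erase_of_mem (mem_univ i)]
    rfl
  simp only [betaAngle, Qh, yc, prod_const, sum_const, hcard, nsmul_eq_mul,
    card_univ, Fintype.card_fin, Nat.cast_ofNat, sinh_add_add_self]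
  rw [sqrt_sq hsinh.le, sqrt_sq (mul_pos hsinh (one_add_two_cosh_pos _)).le, regularDihedralCos,
    cosh_two_mul]
  congr 1
  field_simp
  ring

lemma solidAngle_const {t : ℝ} (ht : 0 < t) (i : Fin 4) :
    solidAngle (fun _ => t) i = regularSolidAngle (2 * t) := by
  rw [solidAngle, sum_congr rfl fun j hj => betaAngle_const ht (ne_of_mem_erase hj).symm,
    sum_const, card_erase_of_mem (mem_univ i)]
  simp [regularSolidAngle]

/-- For `t > 0` the constant vector lies in `Ω` with
`α₁(t·𝟙) = 3 arccos(cosh 2t / (1 + 2 cosh 2t)) − π`; this function of `t` is strictly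
decreasing on `(0,∞)`, tends to `3 arccos(1/3) − π` as `t → 0⁺` and to `0` as `t → ∞`. -/
theorem stmt3 :
    (∀ t : ℝ, 0 < t → ((fun _ => t) : Fin 4 → ℝ) ∈ OmegaSet ∧
      solidAngle (fun _ => t) 0 =
        3 * Real.arccos (Real.cosh (2 * t) / (1 + 2 * Real.cosh (2 * t))) - Real.pi) ∧
    StrictAntiOn (fun t : ℝ => solidAngle (fun _ => t) 0) (Set.Ioi 0) ∧
    Filter.Tendsto (fun t : ℝ => solidAngle (fun _ => t) 0) (nhdsWithin 0 (Set.Ioi 0))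
      (nhds (3 * Real.arccos (1 / 3) - Real.pi)) ∧
    Filter.Tendsto (fun t : ℝ => solidAngle (fun _ => t) 0) Filter.atTop (nhds 0) := by
  have hconst : Set.EqOn (fun t : ℝ => solidAngle (fun _ => t) 0)
      (fun t => regularSolidAngle (2 * t)) (Set.Ioi 0) := fun t ht => solidAngle_const ht 0
  have hdouble : Tendsto (fun t : ℝ => 2 * t) (nhdsWithin 0 (Set.Ioi 0)) (nhds 0) := by
    simpa only [mul_zero] using
      ((continuous_const_mul (2 : ℝ)).tendsto 0).mono_left nhdsWithin_le_nhds
  refine ⟨fun t ht => ⟨const_mem_OmegaSet ht, hconst ht⟩, ?_, ?_, ?_⟩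
  · refine StrictAntiOn.congr (fun a ha b hb hab => ?_) hconst.symm
    exact regularSolidAngle_strictAntiOn (Set.mem_Ici.2 (mul_pos two_pos ha).le)
      (Set.mem_Ici.2 (mul_pos two_pos hb).le) (by linarith)
  · rw [← regularSolidAngle_zero]
    refine ((continuous_regularSolidAngle.tendsto 0).comp hdouble).congr' ?_
    filter_upwards [self_mem_nhdsWithin] with t ht using (hconst ht).symm
  · refine (tendsto_regularSolidAngle_atTop.comp
      (tendsto_id.const_mul_atTop two_pos)).congr' ?_
    filter_upwards [eventually_gt_atTop 0] with t ht using (hconst ht).symm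
end

section
/- Let r̄ ∈ Dᵢ with Q(r̄) = 0. Then for any sequence r⁽ⁿ⁾ in Ω converging to r̄, one has αᵢ(r⁽ⁿ⁾) → 2π and max{α_j(r⁽ⁿ⁾), α_k(r⁽ⁿ⁾), α_l(r⁽ⁿ⁾)} → 0 as n → ∞, where {j,k,l} are the three indices other than i. -/
open Real Finset Filter

/- ### Auxiliary lemmas -/

lemma sinh_triple (x y z : ℝ) (hx : Real.sinh x ≠ 0) (hy : Real.sinh y ≠ 0)
    (hz : Real.sinh z ≠ 0) :
    Real.sinh (x+y+z) = Real.sinh x * Real.sinh y * Real.sinh z *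
      ((Real.cosh x/Real.sinh x)*(Real.cosh y/Real.sinh y)
        + (Real.cosh y/Real.sinh y)*(Real.cosh z/Real.sinh z)
        + (Real.cosh z/Real.sinh z)*(Real.cosh x/Real.sinh x) + 1) := by
  rw [Real.sinh_add, Real.sinh_add, Real.cosh_add]; field_simp; ring

lemma yc_pos (r : Fin 4 → ℝ) (hr : ∀ m, 0 < r m) (m : Fin 4) : 0 < yc r m :=
  div_pos (Real.cosh_pos (r m)) (Real.sinh_pos_iff.2 (hr m))

lemma erase_erase_eq : ∀ (a b c d : Fin 4), a ≠ b → a ≠ c → a ≠ d → b ≠ c → b ≠ d → c ≠ d →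
    (Finset.univ.erase a).erase b = {c, d} := by decide

lemma erase_univ_eq : ∀ (a b c d : Fin 4), a ≠ b → a ≠ c → a ≠ d → b ≠ c → b ≠ d → c ≠ d →
    (Finset.univ : Finset (Fin 4)).erase a = {b, c, d} := by decide

lemma exists_others : ∀ i : Fin 4, ∃ j k l : Fin 4,
    i ≠ j ∧ i ≠ k ∧ i ≠ l ∧ j ≠ k ∧ j ≠ l ∧ k ≠ l := by decide

lemma sum_four (f : Fin 4 → ℝ) (a b c d : Fin 4) (hab : a ≠ b) (hac : a ≠ c) (had : a ≠ d)
    (hbc : b ≠ c) (hbd : b ≠ d) (hcd : c ≠ d) :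
    ∑ m, f m = f a + f b + f c + f d := by
  have h : (Finset.univ : Finset (Fin 4)) = {a, b, c, d} := by
    revert hab hac had hbc hbd hcd; revert a b c d; decide
  rw [h, Finset.sum_insert (by simp [hab, hac, had]),
    Finset.sum_insert (by simp [hbc, hbd]), Finset.sum_insert (by simp [hcd]),
    Finset.sum_singleton]
  ring

lemma arg_eval (r : Fin 4 → ℝ) (hr : ∀ m, 0 < r m) (a b c d : Fin 4)
    (hset : (Finset.univ.erase a).erase b = {c, d}) (hcd : c ≠ d) :
    (Real.sinh (r a) * Real.sinh (r b)
        * Real.sqrt (∏ m ∈ (Finset.univ.erase a).erase b, Real.sinh (r m)))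
      / (4 * Real.sqrt (∏ m ∈ (Finset.univ.erase a).erase b, Real.sinh (r a + r b + r m)))
      * (Qh r - (yc r a + yc r b) ^ 2
          + ((∑ m ∈ (Finset.univ.erase a).erase b, yc r m) ^ 2
              - 4 * ∏ m ∈ (Finset.univ.erase a).erase b, yc r m))
    = (Qh r - (yc r a + yc r b) ^ 2 + (yc r c - yc r d) ^ 2)
      / (4 * Real.sqrt ((yc r a * yc r b + yc r b * yc r c + yc r c * yc r a + 1)
          * (yc r a * yc r b + yc r b * yc r d + yc r d * yc r a + 1))) := by
  have hs : ∀ m, (0:ℝ) < Real.sinh (r m) := fun m => Real.sinh_pos_iff.2 (hr m)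
  have hy : ∀ m, (0:ℝ) < yc r m := yc_pos r hr
  rw [hset]
  simp only [Finset.prod_insert (show c ∉ ({d} : Finset (Fin 4)) by simp [hcd]),
    Finset.sum_insert (show c ∉ ({d} : Finset (Fin 4)) by simp [hcd]),
    Finset.prod_singleton, Finset.sum_singleton]
  set Gc := yc r a * yc r b + yc r b * yc r c + yc r c * yc r a + 1 with hGc
  set Gd := yc r a * yc r b + yc r b * yc r d + yc r d * yc r a + 1 with hGd
  have e1 : Real.sinh (r a + r b + r c)
      = Real.sinh (r a) * Real.sinh (r b) * Real.sinh (r c) * Gc := by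
    rw [sinh_triple _ _ _ (hs a).ne' (hs b).ne' (hs c).ne']
    simp only [hGc, yc]
  have e2 : Real.sinh (r a + r b + r d)
      = Real.sinh (r a) * Real.sinh (r b) * Real.sinh (r d) * Gd := by
    rw [sinh_triple _ _ _ (hs a).ne' (hs b).ne' (hs d).ne']
    simp only [hGd, yc]
  have hGcpos : 0 < Gc := by
    have h1 := mul_pos (hy a) (hy b); have h2 := mul_pos (hy b) (hy c)
    have h3 := mul_pos (hy c) (hy a); rw [hGc]; linarith
  have hGdpos : 0 < Gd := by
    have h1 := mul_pos (hy a) (hy b); have h2 := mul_pos (hy b) (hy d)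
    have h3 := mul_pos (hy d) (hy a); rw [hGd]; linarith
  rw [e1, e2]
  rw [show Real.sinh (r a) * Real.sinh (r b) * Real.sinh (r c) * Gc
      * (Real.sinh (r a) * Real.sinh (r b) * Real.sinh (r d) * Gd)
      = (Real.sinh (r a) * Real.sinh (r b))^2
        * ((Real.sinh (r c) * Real.sinh (r d)) * (Gc * Gd)) from by ring]
  rw [Real.sqrt_mul (sq_nonneg _) ((Real.sinh (r c) * Real.sinh (r d)) * (Gc * Gd)),
      Real.sqrt_sq (le_of_lt (mul_pos (hs a) (hs b))),
      Real.sqrt_mul (le_of_lt (mul_pos (hs c) (hs d))) (Gc * Gd)]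
  have hsq : (0:ℝ) < Real.sqrt (Real.sinh (r c) * Real.sinh (r d)) :=
    Real.sqrt_pos.2 (mul_pos (hs c) (hs d))
  have hsqG : (0:ℝ) < Real.sqrt (Gc * Gd) := Real.sqrt_pos.2 (mul_pos hGcpos hGdpos)
  rw [show (yc r c + yc r d)^2 - 4 * (yc r c * yc r d) = (yc r c - yc r d)^2 from by ring]
  rw [div_mul_eq_mul_div, div_eq_div_iff
    (mul_pos four_pos (mul_pos (mul_pos (hs a) (hs b)) (mul_pos hsq hsqG))).ne'
    (mul_pos four_pos hsqG).ne']
  ring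

lemma val_neg_one (A B C D : ℝ) (hA : 0 < A) (hB : 0 < B) (hC : 0 < C) (hD : 0 < D)
    (hineq : (C - D)^2 ≤ (A + B)^2)
    (hQ : (A+B+C+D)^2 - 2*(A^2+B^2+C^2+D^2) + 4 = 0) :
    ((A+B+C+D)^2 - 2*(A^2+B^2+C^2+D^2) + 4 - (A+B)^2 + (C-D)^2)
      / (4 * Real.sqrt ((A*B + B*C + C*A + 1) * (A*B + B*D + D*A + 1))) = -1 := by
  have hG1 : 0 < A*B + B*C + C*A + 1 := by
    have h1 := mul_pos hA hB; have h2 := mul_pos hB hC; have h3 := mul_pos hC hA; linarith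
  have hG2 : 0 < A*B + B*D + D*A + 1 := by
    have h1 := mul_pos hA hB; have h2 := mul_pos hB hD; have h3 := mul_pos hD hA; linarith
  have hGpos : 0 < (A*B + B*C + C*A + 1) * (A*B + B*D + D*A + 1) := mul_pos hG1 hG2
  set E := (A+B+C+D)^2 - 2*(A^2+B^2+C^2+D^2) + 4 - (A+B)^2 + (C-D)^2 with hE
  have hEsq : E^2 = 16 * ((A*B + B*C + C*A + 1) * (A*B + B*D + D*A + 1)) := by
    rw [hE]; linear_combination (-4*(A+B)^2) * hQ
  have hEle : E ≤ 0 := by rw [hE]; linarith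
  have hEne : E ≠ 0 := by
    intro h; rw [h] at hEsq; nlinarith
  have hElt : E < 0 := lt_of_le_of_ne hEle hEne
  have hsqrt : Real.sqrt ((A*B + B*C + C*A + 1) * (A*B + B*D + D*A + 1)) = -E/4 := by
    rw [show (A*B + B*C + C*A + 1) * (A*B + B*D + D*A + 1) = (-E/4)^2 from by
      linear_combination (-1/16 : ℝ) * hEsq]
    exact Real.sqrt_sq (by linarith)
  rw [hsqrt, show (4:ℝ) * (-E/4) = -E from by ring,
    div_eq_iff (by simpa using hEne : -E ≠ 0)]
  ring

lemma val_one (A B C D : ℝ) (hA : 0 < A) (hB : 0 < B) (hC : 0 < C) (hD : 0 < D)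
    (hineq : (A + B)^2 ≤ (C - D)^2)
    (hQ : (A+B+C+D)^2 - 2*(A^2+B^2+C^2+D^2) + 4 = 0) :
    ((A+B+C+D)^2 - 2*(A^2+B^2+C^2+D^2) + 4 - (A+B)^2 + (C-D)^2)
      / (4 * Real.sqrt ((A*B + B*C + C*A + 1) * (A*B + B*D + D*A + 1))) = 1 := by
  have hG1 : 0 < A*B + B*C + C*A + 1 := by
    have h1 := mul_pos hA hB; have h2 := mul_pos hB hC; have h3 := mul_pos hC hA; linarith
  have hG2 : 0 < A*B + B*D + D*A + 1 := by
    have h1 := mul_pos hA hB; have h2 := mul_pos hB hD; have h3 := mul_pos hD hA; linarith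
  have hGpos : 0 < (A*B + B*C + C*A + 1) * (A*B + B*D + D*A + 1) := mul_pos hG1 hG2
  set E := (A+B+C+D)^2 - 2*(A^2+B^2+C^2+D^2) + 4 - (A+B)^2 + (C-D)^2 with hE
  have hEsq : E^2 = 16 * ((A*B + B*C + C*A + 1) * (A*B + B*D + D*A + 1)) := by
    rw [hE]; linear_combination (-4*(A+B)^2) * hQ
  have hEge : 0 ≤ E := by rw [hE]; linarith
  have hEne : E ≠ 0 := by
    intro h; rw [h] at hEsq; nlinarith
  have hElt : 0 < E := lt_of_le_of_ne hEge (Ne.symm hEne)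
  have hsqrt : Real.sqrt ((A*B + B*C + C*A + 1) * (A*B + B*D + D*A + 1)) = E/4 := by
    rw [show (A*B + B*C + C*A + 1) * (A*B + B*D + D*A + 1) = (E/4)^2 from by
      linear_combination (-1/16 : ℝ) * hEsq]
    exact Real.sqrt_sq (by linarith)
  rw [hsqrt, show (4:ℝ) * (E/4) = E from by ring, div_eq_iff hEne]
  ring

lemma yc_contAt (rbar : Fin 4 → ℝ) (h : ∀ m, 0 < rbar m) (m : Fin 4) :
    ContinuousAt (fun r : Fin 4 → ℝ => yc r m) rbar :=
  ((Real.continuous_cosh.comp (continuous_apply m)).continuousAt).div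
    ((Real.continuous_sinh.comp (continuous_apply m)).continuousAt)
    (Real.sinh_pos_iff.2 (h m)).ne'

lemma Qh_contAt (rbar : Fin 4 → ℝ) (h : ∀ m, 0 < rbar m) : ContinuousAt Qh rbar := by
  have hy := yc_contAt rbar h
  unfold Qh
  simp only [Fin.sum_univ_four]
  exact (((((hy 0).add (hy 1)).add (hy 2)).add (hy 3)).pow 2).sub
    (continuousAt_const.mul ((((hy 0).pow 2).add ((hy 1).pow 2)).add
      ((hy 2).pow 2) |>.add ((hy 3).pow 2))) |>.add continuousAt_const

lemma beta_tendsto (rbar : Fin 4 → ℝ) (hpos : ∀ m, 0 < rbar m)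
    (rs : ℕ → Fin 4 → ℝ) (hrs : ∀ n m, 0 < rs n m)
    (hconv : Filter.Tendsto rs Filter.atTop (nhds rbar))
    (a b c d : Fin 4) (hab : a ≠ b) (hac : a ≠ c) (had : a ≠ d) (hbc : b ≠ c) (hbd : b ≠ d)
    (hcd : c ≠ d) (v : ℝ)
    (hval : (Qh rbar - (yc rbar a + yc rbar b)^2 + (yc rbar c - yc rbar d)^2)
      / (4 * Real.sqrt ((yc rbar a * yc rbar b + yc rbar b * yc rbar c
            + yc rbar c * yc rbar a + 1)
          * (yc rbar a * yc rbar b + yc rbar b * yc rbar d + yc rbar d * yc rbar a + 1))) = v) :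
    Filter.Tendsto (fun n => betaAngle (rs n) a b) Filter.atTop (nhds (Real.arccos v)) := by
  have hset : (Finset.univ.erase a).erase b = {c, d} :=
    erase_erase_eq a b c d hab hac had hbc hbd hcd
  have hy := yc_contAt rbar hpos
  have hypos := yc_pos rbar hpos
  have hG1 : 0 < yc rbar a * yc rbar b + yc rbar b * yc rbar c + yc rbar c * yc rbar a + 1 := by
    have h1 := mul_pos (hypos a) (hypos b); have h2 := mul_pos (hypos b) (hypos c)
    have h3 := mul_pos (hypos c) (hypos a); linarith
  have hG2 : 0 < yc rbar a * yc rbar b + yc rbar b * yc rbar d + yc rbar d * yc rbar a + 1 := by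
    have h1 := mul_pos (hypos a) (hypos b); have h2 := mul_pos (hypos b) (hypos d)
    have h3 := mul_pos (hypos d) (hypos a); linarith
  have hFc : ContinuousAt (fun r : Fin 4 → ℝ =>
      (Qh r - (yc r a + yc r b)^2 + (yc r c - yc r d)^2)
      / (4 * Real.sqrt ((yc r a * yc r b + yc r b * yc r c + yc r c * yc r a + 1)
          * (yc r a * yc r b + yc r b * yc r d + yc r d * yc r a + 1)))) rbar := by
    apply ContinuousAt.div
    · exact ((Qh_contAt rbar hpos).sub ((((hy a).add (hy b))).pow 2)).add
        (((hy c).sub (hy d)).pow 2)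
    · exact continuousAt_const.mul (Real.continuous_sqrt.continuousAt.comp
        (((((hy a).mul (hy b)).add ((hy b).mul (hy c))).add
            ((hy c).mul (hy a)) |>.add continuousAt_const).mul
          ((((hy a).mul (hy b)).add ((hy b).mul (hy d))).add
            ((hy d).mul (hy a)) |>.add continuousAt_const)))
    · exact (mul_pos four_pos (Real.sqrt_pos.2 (mul_pos hG1 hG2))).ne'
  have h1 : Filter.Tendsto (fun n =>
      (Qh (rs n) - (yc (rs n) a + yc (rs n) b)^2 + (yc (rs n) c - yc (rs n) d)^2)
      / (4 * Real.sqrt ((yc (rs n) a * yc (rs n) b + yc (rs n) b * yc (rs n) c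
            + yc (rs n) c * yc (rs n) a + 1)
          * (yc (rs n) a * yc (rs n) b + yc (rs n) b * yc (rs n) d
            + yc (rs n) d * yc (rs n) a + 1)))) Filter.atTop (nhds
      ((Qh rbar - (yc rbar a + yc rbar b)^2 + (yc rbar c - yc rbar d)^2)
      / (4 * Real.sqrt ((yc rbar a * yc rbar b + yc rbar b * yc rbar c
            + yc rbar c * yc rbar a + 1)
          * (yc rbar a * yc rbar b + yc rbar b * yc rbar d + yc rbar d * yc rbar a + 1))))) :=
    hFc.tendsto.comp hconv
  rw [hval] at h1
  have h2 := (Real.continuous_arccos.tendsto v).comp h1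
  apply h2.congr
  intro n
  simp only [Function.comp_apply, betaAngle]
  rw [arg_eval (rs n) (hrs n) a b c d hset hcd]
/-- If `r̄ ∈ Dᵢ` with `Q(r̄) = 0`, then along any sequence in `Ω` converging
to `r̄`, `αᵢ → 2π` and `α_j → 0` for every other index `j`. -/
theorem stmt4 (i : Fin 4) (rbar : Fin 4 → ℝ) (h1 : rbar ∈ Dset i) (h2 : Qh rbar = 0)
    (rs : ℕ → Fin 4 → ℝ) (hΩ : ∀ n, rs n ∈ OmegaSet)
    (hconv : Filter.Tendsto rs Filter.atTop (nhds rbar)) :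
    Filter.Tendsto (fun n => solidAngle (rs n) i) Filter.atTop (nhds (2 * Real.pi)) ∧
    ∀ j, j ≠ i → Filter.Tendsto (fun n => solidAngle (rs n) j) Filter.atTop (nhds 0) := by
  obtain ⟨hposb, hDb⟩ := h1
  have hy : ∀ m, 0 < yc rbar m := yc_pos rbar hposb
  have hrs : ∀ n m, 0 < rs n m := fun n => (hΩ n).1
  obtain ⟨j, k, l, hij, hik, hil, hjk, hjl, hkl⟩ := exists_others i
  have hsum3 : ∀ f : Fin 4 → ℝ, ∑ m ∈ Finset.univ.erase i, f m = f j + f k + f l := by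
    intro f
    rw [erase_univ_eq i j k l hij hik hil hjk hjl hkl,
      Finset.sum_insert (by simp [hjk, hjl]), Finset.sum_insert (by simp [hkl]),
      Finset.sum_singleton]
    ring
  simp only [hsum3] at hDb
  have hyi : yc rbar j + yc rbar k + yc rbar l ≤ yc rbar i := by
    have hs := Real.sqrt_nonneg (((yc rbar j + yc rbar k + yc rbar l)^2
      - ((yc rbar j)^2 + (yc rbar k)^2 + (yc rbar l)^2))/2 + 1)
    linarith
  have hQexp : ∀ a b c d : Fin 4, a ≠ b → a ≠ c → a ≠ d → b ≠ c → b ≠ d → c ≠ d →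
      Qh rbar = (yc rbar a + yc rbar b + yc rbar c + yc rbar d)^2
        - 2*((yc rbar a)^2 + (yc rbar b)^2 + (yc rbar c)^2 + (yc rbar d)^2) + 4 := by
    intro a b c d h1' h2' h3' h4' h5' h6'
    rw [Qh, sum_four (yc rbar) a b c d h1' h2' h3' h4' h5' h6',
      sum_four (fun m => (yc rbar m)^2) a b c d h1' h2' h3' h4' h5' h6']
  have hQe : ∀ a b c d : Fin 4, a ≠ b → a ≠ c → a ≠ d → b ≠ c → b ≠ d → c ≠ d →
      (yc rbar a + yc rbar b + yc rbar c + yc rbar d)^2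
        - 2*((yc rbar a)^2 + (yc rbar b)^2 + (yc rbar c)^2 + (yc rbar d)^2) + 4 = 0 := by
    intro a b c d h1' h2' h3' h4' h5' h6'
    rw [← hQexp a b c d h1' h2' h3' h4' h5' h6']
    exact h2
  have main_pi : ∀ a b c d : Fin 4, a ≠ b → a ≠ c → a ≠ d → b ≠ c → b ≠ d → c ≠ d →
      (yc rbar c - yc rbar d)^2 ≤ (yc rbar a + yc rbar b)^2 →
      Filter.Tendsto (fun n => betaAngle (rs n) a b) Filter.atTop (nhds Real.pi) := by
    intro a b c d h1' h2' h3' h4' h5' h6' hineq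
    have hT := beta_tendsto rbar hposb rs hrs hconv a b c d h1' h2' h3' h4' h5' h6' (-1)
      (by rw [hQexp a b c d h1' h2' h3' h4' h5' h6']
          exact val_neg_one _ _ _ _ (hy a) (hy b) (hy c) (hy d) hineq
            (hQe a b c d h1' h2' h3' h4' h5' h6'))
    rwa [Real.arccos_neg_one] at hT
  have main_zero : ∀ a b c d : Fin 4, a ≠ b → a ≠ c → a ≠ d → b ≠ c → b ≠ d → c ≠ d →
      (yc rbar a + yc rbar b)^2 ≤ (yc rbar c - yc rbar d)^2 →
      Filter.Tendsto (fun n => betaAngle (rs n) a b) Filter.atTop (nhds 0) := by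
    intro a b c d h1' h2' h3' h4' h5' h6' hineq
    have hT := beta_tendsto rbar hposb rs hrs hconv a b c d h1' h2' h3' h4' h5' h6' 1
      (by rw [hQexp a b c d h1' h2' h3' h4' h5' h6']
          exact val_one _ _ _ _ (hy a) (hy b) (hy c) (hy d) hineq
            (hQe a b c d h1' h2' h3' h4' h5' h6'))
    rwa [Real.arccos_one] at hT
  constructor
  · have T1 := main_pi i j k l hij hik hil hjk hjl hkl
      (sq_le_sq' (by linarith [hy i, hy j, hy k, hy l]) (by linarith [hy i, hy j, hy k, hy l]))
    have T2 := main_pi i k j l hik hij hil hjk.symm hkl hjl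
      (sq_le_sq' (by linarith [hy i, hy j, hy k, hy l]) (by linarith [hy i, hy j, hy k, hy l]))
    have T3 := main_pi i l j k hil hij hik hjl.symm hkl.symm hjk
      (sq_le_sq' (by linarith [hy i, hy j, hy k, hy l]) (by linarith [hy i, hy j, hy k, hy l]))
    have S := ((T1.add T2).add T3).sub
      (tendsto_const_nhds : Filter.Tendsto (fun _ : ℕ => Real.pi) Filter.atTop (nhds Real.pi))
    rw [show Real.pi + Real.pi + Real.pi - Real.pi = 2 * Real.pi from by ring] at S
    apply S.congr
    intro n
    simp only [solidAngle]
    rw [hsum3 (betaAngle (rs n) i)]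
  · intro m hmi
    have hm : m = j ∨ m = k ∨ m = l := by
      have hmem : m ∈ (Finset.univ : Finset (Fin 4)).erase i := by simp [hmi]
      rw [erase_univ_eq i j k l hij hik hil hjk hjl hkl] at hmem
      simpa using hmem
    rcases hm with rfl | rfl | rfl
    · have hsum3' : ∀ f : Fin 4 → ℝ, ∑ m ∈ Finset.univ.erase m, f m = f i + f k + f l := by
        intro f
        rw [erase_univ_eq m i k l hij.symm hjk hjl hik hil hkl,
          Finset.sum_insert (by simp [hik, hil]), Finset.sum_insert (by simp [hkl]),
          Finset.sum_singleton]
        ring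
      have T1 := main_pi m i k l hij.symm hjk hjl hik hil hkl
        (sq_le_sq' (by linarith [hy i, hy m, hy k, hy l]) (by linarith [hy i, hy m, hy k, hy l]))
      have T2 := main_zero m k i l hjk hij.symm hjl hik.symm hkl hil
        (pow_le_pow_left₀ (by linarith [hy m, hy k]) (by linarith [hy i, hy m, hy k, hy l]) 2)
      have T3 := main_zero m l i k hjl hij.symm hjk hil.symm hkl.symm hik
        (pow_le_pow_left₀ (by linarith [hy m, hy l]) (by linarith [hy i, hy m, hy k, hy l]) 2)
      have S := ((T1.add T2).add T3).sub
        (tendsto_const_nhds : Filter.Tendsto (fun _ : ℕ => Real.pi) Filter.atTop (nhds Real.pi))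
      rw [show Real.pi + 0 + 0 - Real.pi = (0:ℝ) from by ring] at S
      apply S.congr
      intro n
      simp only [solidAngle]
      rw [hsum3' (betaAngle (rs n) m)]
    · have hsum3' : ∀ f : Fin 4 → ℝ, ∑ m ∈ Finset.univ.erase m, f m = f i + f j + f l := by
        intro f
        rw [erase_univ_eq m i j l hik.symm hjk.symm hkl hij hil hjl,
          Finset.sum_insert (by simp [hij, hil]), Finset.sum_insert (by simp [hjl]),
          Finset.sum_singleton]
        ring
      have T1 := main_pi m i j l hik.symm hjk.symm hkl hij hil hjl
        (sq_le_sq' (by linarith [hy i, hy j, hy m, hy l]) (by linarith [hy i, hy j, hy m, hy l]))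
      have T2 := main_zero m j i l hjk.symm hik.symm hkl hij.symm hjl hil
        (pow_le_pow_left₀ (by linarith [hy j, hy m]) (by linarith [hy i, hy j, hy m, hy l]) 2)
      have T3 := main_zero m l i j hkl hik.symm hjk.symm hil.symm hjl.symm hij
        (pow_le_pow_left₀ (by linarith [hy m, hy l]) (by linarith [hy i, hy j, hy m, hy l]) 2)
      have S := ((T1.add T2).add T3).sub
        (tendsto_const_nhds : Filter.Tendsto (fun _ : ℕ => Real.pi) Filter.atTop (nhds Real.pi))
      rw [show Real.pi + 0 + 0 - Real.pi = (0:ℝ) from by ring] at S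
      apply S.congr
      intro n
      simp only [solidAngle]
      rw [hsum3' (betaAngle (rs n) m)]
    · have hsum3' : ∀ f : Fin 4 → ℝ, ∑ m ∈ Finset.univ.erase m, f m = f i + f j + f k := by
        intro f
        rw [erase_univ_eq m i j k hil.symm hjl.symm hkl.symm hij hik hjk,
          Finset.sum_insert (by simp [hij, hik]), Finset.sum_insert (by simp [hjk]),
          Finset.sum_singleton]
        ring
      have T1 := main_pi m i j k hil.symm hjl.symm hkl.symm hij hik hjk
        (sq_le_sq' (by linarith [hy i, hy j, hy k, hy m]) (by linarith [hy i, hy j, hy k, hy m]))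
      have T2 := main_zero m j i k hjl.symm hil.symm hkl.symm hij.symm hjk hik
        (pow_le_pow_left₀ (by linarith [hy j, hy m]) (by linarith [hy i, hy j, hy k, hy m]) 2)
      have T3 := main_zero m k i j hkl.symm hil.symm hjl.symm hik.symm hjk.symm hij
        (pow_le_pow_left₀ (by linarith [hy k, hy m]) (by linarith [hy i, hy j, hy k, hy m]) 2)
      have S := ((T1.add T2).add T3).sub
        (tendsto_const_nhds : Filter.Tendsto (fun _ : ℕ => Real.pi) Filter.atTop (nhds Real.pi))
      rw [show Real.pi + 0 + 0 - Real.pi = (0:ℝ) from by ring] at S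
      apply S.congr
      intro n
      simp only [solidAngle]
      rw [hsum3' (betaAngle (rs n) m)]
end

section
/- Let f : [0,∞) → ℝ be locally Lipschitz (hence differentiable almost everywhere) and let C ∈ ℝ. (1) If f′(t) ≤ 0 for almost every t in the upper level set {t ∈ [0,∞) : f(t) > C}, then f(t) ≤ max{f(0), C} for all t ∈ [0,∞). (2) If f′(t) ≥ 0 for almost every t in the lower level set {t ∈ [0,∞) : f(t) < C}, then f(t) ≥ min{f(0), C} for all t ∈ [0,∞). -/
open Real Finset Filter

/-! A Lipschitz function on a compact interval is absolutely continuous, so it is the integral of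
its a.e. derivative. If `f t > M := max (f a) C`, let `s` be the last time in `[a, t]` with
`f s ≤ M`; on `(s, t)` we have `f > C`, so `f' ≤ 0` a.e. there and `f t ≤ f s ≤ M`, a
contradiction. The lower bound is the upper bound for `-f`. -/

open MeasureTheory Set

lemma LocallyLipschitzOn.absolutelyContinuousOnInterval {f : ℝ → ℝ} {s : Set ℝ} {a b : ℝ}
    (hf : LocallyLipschitzOn s f) (hs : uIcc a b ⊆ s) :
    AbsolutelyContinuousOnInterval f a b :=
  let ⟨_, hK⟩ := (hf.mono hs).exists_lipschitzOnWith_of_compact isCompact_uIcc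
  hK.absolutelyContinuousOnInterval

lemma AbsolutelyContinuousOnInterval.le_of_ae_hasDerivAt_nonpos {f : ℝ → ℝ} {a b : ℝ}
    (hf : AbsolutelyContinuousOnInterval f a b) (hab : a ≤ b)
    (hd : ∀ᵐ x, x ∈ Ioo a b → ∀ d, HasDerivAt f d x → d ≤ 0) : f b ≤ f a := by
  have hderiv : ∀ᵐ x ∂volume.restrict (Icc a b), deriv f x ≤ 0 := by
    rw [← Measure.restrict_congr_set Ioo_ae_eq_Icc, ae_restrict_iff' measurableSet_Ioo]
    filter_upwards [hd, hf.ae_differentiableAt] with x hx hdiff hmem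
    exact hx hmem _ (hdiff (Icc_subset_uIcc (Ioo_subset_Icc_self hmem))).hasDerivAt
  have := intervalIntegral.integral_nonneg_of_ae_restrict hab
    (hderiv.mono fun _ hx => neg_nonneg.2 hx)
  rw [intervalIntegral.integral_neg, hf.integral_deriv_eq_sub] at this
  linarith

lemma LocallyLipschitzOn.le_max_of_ae_hasDerivAt_nonpos {f : ℝ → ℝ} {a C : ℝ}
    (hf : LocallyLipschitzOn (Ici a) f)
    (hd : ∀ᵐ t, a ≤ t → C < f t → ∀ d, HasDerivAt f d t → d ≤ 0)
    {t : ℝ} (ht : a ≤ t) :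
    f t ≤ max (f a) C := by
  set M := max (f a) C
  by_contra! hMt
  set B := {s ∈ Icc a t | f s ≤ M}
  have hBa : a ∈ B := ⟨⟨le_rfl, ht⟩, le_max_left _ _⟩
  have hBbdd : BddAbove B := ⟨t, fun s hs => hs.1.2⟩
  have hBclosed : IsClosed B :=
    (hf.continuousOn.mono Icc_subset_Ici_self).preimage_isClosed_of_isClosed
      isClosed_Icc isClosed_Iic
  set s := sSup B
  obtain ⟨⟨has, hst⟩, hfs⟩ : s ∈ B := hBclosed.csSup_mem ⟨a, hBa⟩ hBbdd
  have hgt : ∀ x ∈ Ioo s t, M < f x := fun x hx => by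
    by_contra! hx'
    exact (le_csSup hBbdd ⟨⟨has.trans hx.1.le, hx.2.le⟩, hx'⟩).not_gt hx.1
  have hst_le : f t ≤ f s := by
    refine (hf.absolutelyContinuousOnInterval ?_).le_of_ae_hasDerivAt_nonpos hst ?_
    · rw [uIcc_of_le hst]; exact (Icc_subset_Ici_iff hst).2 has
    · filter_upwards [hd] with x hx hmem
      exact hx (has.trans hmem.1.le) ((le_max_right _ _).trans_lt (hgt x hmem))
  linarith

lemma LocallyLipschitzOn.min_le_of_ae_hasDerivAt_nonneg {f : ℝ → ℝ} {a C : ℝ}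
    (hf : LocallyLipschitzOn (Ici a) f)
    (hd : ∀ᵐ t, a ≤ t → f t < C → ∀ d, HasDerivAt f d t → 0 ≤ d)
    {t : ℝ} (ht : a ≤ t) :
    min (f a) C ≤ f t := by
  have hneg : ∀ᵐ t, a ≤ t → -C < (-f) t → ∀ d, HasDerivAt (-f) d t → d ≤ 0 := by
    filter_upwards [hd] with x hx hax hCx d hfd
    simpa using hx hax (neg_lt_neg_iff.1 hCx) (-d) (by simpa using hfd.neg)
  have := hf.neg.le_max_of_ae_hasDerivAt_nonpos hneg ht
  rw [Pi.neg_apply, Pi.neg_apply, max_neg_neg] at this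
  exact neg_le_neg_iff.1 this

/-- maximum/minimum principle for locally Lipschitz functions on `[0,∞)`. -/
theorem stmt10 (f : ℝ → ℝ) (C : ℝ)
    (hlip : ∀ t ∈ Set.Ici (0:ℝ), ∃ K : NNReal, ∃ ε > 0,
      LipschitzOnWith K f (Set.Ici 0 ∩ Metric.ball t ε)) :
    ((∀ᵐ t ∂MeasureTheory.volume, 0 ≤ t → C < f t → ∀ d, HasDerivAt f d t → d ≤ 0) →
      ∀ t, 0 ≤ t → f t ≤ max (f 0) C) ∧
    ((∀ᵐ t ∂MeasureTheory.volume, 0 ≤ t → f t < C → ∀ d, HasDerivAt f d t → 0 ≤ d) →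
      ∀ t, 0 ≤ t → min (f 0) C ≤ f t) := by
  have hf : LocallyLipschitzOn (Ici 0) f := fun t ht =>
    let ⟨K, ε, hε, hK⟩ := hlip t ht
    ⟨K, _, inter_mem_nhdsWithin _ (Metric.ball_mem_nhds t hε), hK⟩
  exact ⟨fun hd _ => hf.le_max_of_ae_hasDerivAt_nonpos hd,
    fun hd _ => hf.min_le_of_ae_hasDerivAt_nonneg hd⟩
end
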